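/- arXiv:2410.13449 — 5 statements merged into one kernel-verified Lean document; each statement's English description precedes it below -/
import Mathlib

section
/- Let A be a 2n×2n integer symplectic matrix that is diagonalizable over ℂ, and let V ⊂ ℝ^{2n} be a rational A-invariant subspace that is not coisotropic. Then there exists a nontrivial rational A-invariant subspace W ⊆ V^{⊥σ} such that W ∩ V = {0} and W is symplectic (i.e. W ∩ W^{⊥σ} = {0}). -/
open Matrix

/-- The standard symplectic form on `ℝ^{2n}`, coordinates indexed by `Fin n ⊕ Fin n`
(`Sum.inl` = positions, `Sum.inr` = momenta): `σ((x,ξ),(y,η)) = ⟨ξ,y⟩ − ⟨η,x⟩`. -/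
def stdSymp (R : Type*) [CommRing R] (n : ℕ) (v w : Fin n ⊕ Fin n → R) : R :=
  (∑ i : Fin n, v (Sum.inr i) * w (Sum.inl i)) - ∑ i : Fin n, v (Sum.inl i) * w (Sum.inr i)

/-- The symplectic complement `V^{⊥σ} = {w : σ(w,z) = 0 for all z ∈ V}`. -/
noncomputable def sympCompl (n : ℕ) (V : Submodule ℝ (Fin n ⊕ Fin n → ℝ)) :
    Submodule ℝ (Fin n ⊕ Fin n → ℝ) where
  carrier := {w | ∀ z ∈ V, stdSymp ℝ n w z = 0}
  zero_mem' := by intro z _; simp [stdSymp]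
  add_mem' := by
    intro a b ha hb z hz
    have h : stdSymp ℝ n (a + b) z = stdSymp ℝ n a z + stdSymp ℝ n b z := by
      simp only [stdSymp, Pi.add_apply, add_mul, Finset.sum_add_distrib]
      ring
    rw [h, ha z hz, hb z hz, add_zero]
  smul_mem' := by
    intro c a ha z hz
    have h : stdSymp ℝ n (c • a) z = c * stdSymp ℝ n a z := by
      simp only [stdSymp, Pi.smul_apply, smul_eq_mul, mul_sub, Finset.mul_sum, mul_assoc]
    rw [h, ha z hz, mul_zero]


/-- A subspace of `ℝ^ι` is rational if it is spanned by vectors with rational coordinates. -/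
def IsRationalSubspace {ι : Type*} [Fintype ι] (V : Submodule ℝ (ι → ℝ)) : Prop :=
  ∃ s : Set (ι → ℚ), V = Submodule.span ℝ ((fun q : ι → ℚ => fun i => (q i : ℝ)) '' s)

namespace Stmt4Aux

open Polynomial Module Submodule

/-- linear independence transfers from ℚ to ℝ for rational vectors -/
lemma li_transfer {ι : Type*} [Fintype ι] [DecidableEq ι] {κ : Type*} [Fintype κ] [DecidableEq κ]
    (v : κ → ι → ℚ) (hv : LinearIndependent ℚ v) :
    LinearIndependent ℝ (fun k => fun i => ((v k i : ℚ) : ℝ)) := by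
  classical
  set M : Matrix ι κ ℚ := fun i k => v k i with hM
  have hker : LinearMap.ker M.mulVecLin = ⊥ := by
    rw [LinearMap.ker_eq_bot']
    intro x hx
    replace hx : M *ᵥ x = 0 := hx
    have hsum : ∑ k, x k • v k = 0 := by
      funext i
      have := congrFun hx i
      simpa [Matrix.mulVec, dotProduct, Finset.sum_apply, mul_comm] using this
    funext k
    exact Fintype.linearIndependent_iff.mp hv x hsum k
  obtain ⟨g, hg⟩ := M.mulVecLin.exists_leftInverse_of_injective hker
  set L : Matrix κ ι ℚ := LinearMap.toMatrix' g with hL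
  have key : L * M = 1 := by
    apply Matrix.toLin'.injective
    rw [Matrix.toLin'_mul, Matrix.toLin'_one]
    have h1 : Matrix.toLin' L = g := Matrix.toLin'_toMatrix' g
    have h2 : Matrix.toLin' M = M.mulVecLin := by
      ext x; simp [Matrix.toLin'_apply]
    rw [h1, h2]
    exact hg
  have keyR : (L.map (Rat.cast : ℚ → ℝ)) * (M.map (Rat.cast : ℚ → ℝ)) = 1 := by
    have h : (L * M).map ((Rat.castHom ℝ : ℚ →+* ℝ) : ℚ → ℝ)
        = (1 : Matrix κ κ ℚ).map (Rat.castHom ℝ) := by rw [key]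
    rw [Matrix.map_mul] at h
    simpa using h
  rw [Fintype.linearIndependent_iff]
  intro c hc k
  have hMc : (M.map (Rat.cast : ℚ → ℝ)) *ᵥ c = 0 := by
    funext i
    have := congrFun hc i
    simp [Matrix.mulVec, dotProduct, Finset.sum_apply, mul_comm, hM] at this ⊢
    exact this
  have : c = 0 := by
    calc c = (1 : Matrix κ κ ℝ) *ᵥ c := by rw [Matrix.one_mulVec]
    _ = (L.map (Rat.cast : ℚ → ℝ)) *ᵥ ((M.map (Rat.cast : ℚ → ℝ)) *ᵥ c) := by
        rw [Matrix.mulVec_mulVec, keyR]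
    _ = 0 := by rw [hMc, Matrix.mulVec_zero]
  exact congrFun this k


variable {n : ℕ}

/-- coordinatewise cast `ℚ^ι → ℝ^ι` as a `ℚ`-linear map. -/
noncomputable def jQ (ι : Type*) : (ι → ℚ) →ₗ[ℚ] (ι → ℝ) where
  toFun q := fun i => (q i : ℝ)
  map_add' x y := by funext i; simp only [Pi.add_apply]; push_cast; ring
  map_smul' c x := by
    funext i
    simp only [Pi.smul_apply, Rat.smul_def, RingHom.id_apply]
    push_cast
    ring

lemma jQ_apply {ι : Type*} (q : ι → ℚ) (i : ι) : jQ ι q i = (q i : ℝ) := rfl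

lemma jQ_injective (ι : Type*) : Function.Injective (jQ ι) := by
  intro x y h
  funext i
  have h2 : (x i : ℝ) = (y i : ℝ) := congrFun h i
  exact_mod_cast h2

/-- span over ℝ of a rational subspace -/
noncomputable def ES {ι : Type*} (S : Submodule ℚ (ι → ℚ)) : Submodule ℝ (ι → ℝ) :=
  Submodule.span ℝ (jQ ι '' (S : Set (ι → ℚ)))

lemma mem_ES {ι : Type*} {S : Submodule ℚ (ι → ℚ)} {x : ι → ℚ} (hx : x ∈ S) :
    jQ ι x ∈ ES S :=
  Submodule.subset_span ⟨x, hx, rfl⟩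

lemma ES_le_iff {ι : Type*} {S : Submodule ℚ (ι → ℚ)} {W : Submodule ℝ (ι → ℝ)} :
    ES S ≤ W ↔ ∀ x ∈ S, jQ ι x ∈ W := by
  rw [ES, Submodule.span_le]
  constructor
  · intro h x hx; exact h ⟨x, hx, rfl⟩
  · rintro h _ ⟨x, hx, rfl⟩; exact h x hx

lemma ES_mono {ι : Type*} {S T : Submodule ℚ (ι → ℚ)} (h : S ≤ T) : ES S ≤ ES T :=
  Submodule.span_mono (Set.image_mono  h)

lemma ES_sup {ι : Type*} (S T : Submodule ℚ (ι → ℚ)) : ES (S ⊔ T) = ES S ⊔ ES T := by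
  apply le_antisymm
  · rw [ES_le_iff]
    intro x hx
    obtain ⟨s, hs, t, ht, rfl⟩ := Submodule.mem_sup.mp hx
    rw [map_add]
    exact Submodule.add_mem _ (Submodule.mem_sup_left (mem_ES hs))
      (Submodule.mem_sup_right (mem_ES ht))
  · exact sup_le (ES_mono le_sup_left) (ES_mono le_sup_right)

lemma ES_ne_bot {ι : Type*} {S : Submodule ℚ (ι → ℚ)} (h : S ≠ ⊥) : ES S ≠ ⊥ := by
  obtain ⟨x, hx, hx0⟩ := Submodule.exists_mem_ne_zero_of_ne_bot h
  intro hbot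
  have : jQ ι x ∈ (⊥ : Submodule ℝ (ι → ℝ)) := hbot ▸ mem_ES hx
  rw [Submodule.mem_bot] at this
  exact hx0 (jQ_injective ι (by simpa using this))

lemma ES_span {ι : Type*} (s : Set (ι → ℚ)) :
    ES (Submodule.span ℚ s) = Submodule.span ℝ (jQ ι '' s) := by
  apply le_antisymm
  · rw [ES_le_iff]
    intro x hx
    induction hx using Submodule.span_induction with
    | mem y hy => exact Submodule.subset_span ⟨y, hy, rfl⟩
    | zero => simp
    | add y z _ _ hy hz => rw [map_add]; exact Submodule.add_mem _ hy hz
    | smul c y _ hy =>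
        rw [_root_.map_smul]
        have : (c : ℝ) • jQ ι y ∈ Submodule.span ℝ (jQ ι '' s) := Submodule.smul_mem _ _ hy
        rwa [Rat.cast_smul_eq_qsmul ℝ] at this
  · exact Submodule.span_mono (Set.image_mono  Submodule.subset_span)

lemma isRational_ES {ι : Type*} [Fintype ι] (S : Submodule ℚ (ι → ℚ)) :
    IsRationalSubspace (ES S) :=
  ⟨(S : Set (ι → ℚ)), rfl⟩

lemma finrank_ES {ι : Type*} [Fintype ι] [DecidableEq ι] (S : Submodule ℚ (ι → ℚ)) :
    Module.finrank ℝ (ES S) = Module.finrank ℚ S := by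
  classical
  set m := Module.finrank ℚ S with hm
  let b : Basis (Fin m) ℚ S := Module.finBasis ℚ S
  set v : Fin m → (ι → ℚ) := fun k => (b k : ι → ℚ) with hv
  have hli : LinearIndependent ℚ v := by
    have := b.linearIndependent
    exact this.map' S.subtype S.ker_subtype
  have hspan : S = Submodule.span ℚ (Set.range v) := by
    have h1 : Submodule.span ℚ (Set.range v) = Submodule.map S.subtype
        (Submodule.span ℚ (Set.range b)) := by
      rw [Submodule.map_span]
      congr 1
      rw [← Set.range_comp]
      rfl
    rw [h1, b.span_eq, Submodule.map_top, Submodule.range_subtype]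
  have hES : ES S = Submodule.span ℝ (Set.range fun k => jQ ι (v k)) := by
    conv_lhs => rw [hspan]
    rw [ES_span]
    congr 1
    rw [← Set.range_comp]
    rfl
  have hliR : LinearIndependent ℝ (fun k => jQ ι (v k)) := li_transfer v hli
  rw [hES, finrank_span_eq_card hliR, hm]
  simp

lemma ES_inf_eq_bot {ι : Type*} [Fintype ι] [DecidableEq ι] {S T : Submodule ℚ (ι → ℚ)}
    (h : S ⊓ T = ⊥) : ES S ⊓ ES T = ⊥ := by
  have h1 := Submodule.finrank_sup_add_finrank_inf_eq (ES S) (ES T)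
  have h2 := Submodule.finrank_sup_add_finrank_inf_eq S T
  rw [h, finrank_bot, add_zero] at h2
  rw [← ES_sup, finrank_ES, finrank_ES, finrank_ES, h2] at h1
  have : Module.finrank ℝ ↥(ES S ⊓ ES T) = 0 := by omega
  exact Submodule.finrank_eq_zero.mp this


lemma stdSymp_skew (K : Type*) [Field K] (v w : Fin n ⊕ Fin n → K) :
    stdSymp K n v w = - stdSymp K n w v := by
  simp only [stdSymp]
  rw [neg_sub]
  congr 1 <;> exact Finset.sum_congr rfl fun i _ => mul_comm _ _

/-- The standard symplectic form, with arguments flipped, as a bilinear form. -/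
noncomputable def BF (K : Type*) [Field K] (n : ℕ) :
    LinearMap.BilinForm K (Fin n ⊕ Fin n → K) :=
  LinearMap.mk₂ K (fun z w => stdSymp K n w z)
    (fun x y z => by simp only [stdSymp, Pi.add_apply, mul_add, add_mul,
      Finset.sum_add_distrib]; ring)
    (fun c x z => by simp only [stdSymp, Pi.smul_apply, smul_eq_mul, Finset.mul_sum,
      mul_sub, mul_assoc, mul_left_comm]; try ring)
    (fun z x y => by simp only [stdSymp, Pi.add_apply, mul_add, add_mul,
      Finset.sum_add_distrib]; ring)
    (fun c z x => by simp only [stdSymp, Pi.smul_apply, smul_eq_mul, Finset.mul_sum,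
      mul_sub, mul_assoc, mul_left_comm]; try ring)

lemma BF_apply (K : Type*) [Field K] (z w : Fin n ⊕ Fin n → K) :
    BF K n z w = stdSymp K n w z := rfl

lemma BF_refl (K : Type*) [Field K] : (BF K n).IsRefl := by
  intro x y h
  rw [BF_apply] at h ⊢
  rw [stdSymp_skew, h, neg_zero]

lemma BF_nondeg (K : Type*) [Field K] : (BF K n).Nondegenerate := by
  classical
  refine (LinearMap.IsRefl.nondegenerate_iff_separatingLeft (B := BF K n) (BF_refl K)).mpr ?_
  intro m hm
  funext i
  cases i with
  | inl a =>
    have := hm (Pi.single (Sum.inr a) 1)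
    rw [BF_apply] at this
    simpa [stdSymp, Pi.single_apply] using this
  | inr a =>
    have := hm (Pi.single (Sum.inl a) 1)
    rw [BF_apply] at this
    simpa [stdSymp, Pi.single_apply] using this

lemma finrank_orth (K : Type*) [Field K] (W : Submodule K (Fin n ⊕ Fin n → K)) :
    Module.finrank K ((BF K n).orthogonal W) = 2 * n - Module.finrank K W := by
  rw [LinearMap.BilinForm.finrank_orthogonal (BF_nondeg K)]
  congr 1
  simp [Module.finrank_pi]
  ring


lemma sympCompl_eq_orth (V : Submodule ℝ (Fin n ⊕ Fin n → ℝ)) :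
    sympCompl n V = (BF ℝ n).orthogonal V := rfl

lemma stdSymp_cast (x y : Fin n ⊕ Fin n → ℚ) :
    stdSymp ℝ n (jQ _ x) (jQ _ y) = ((stdSymp ℚ n x y : ℚ) : ℝ) := by
  simp only [stdSymp, jQ_apply]
  push_cast
  ring

lemma ES_orthogonal (S : Submodule ℚ (Fin n ⊕ Fin n → ℚ)) :
    ES ((BF ℚ n).orthogonal S) = (BF ℝ n).orthogonal (ES S) := by
  classical
  have hle : ES ((BF ℚ n).orthogonal S) ≤ (BF ℝ n).orthogonal (ES S) := by
    rw [ES_le_iff]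
    intro x hx
    intro z hz
    -- z ∈ ES S, want BF ℝ n z (jQ x) = 0
    have hker : ES S ≤ LinearMap.ker ((BF ℝ n).flip (jQ _ x)) := by
      rw [ES_le_iff]
      intro y hy
      rw [LinearMap.mem_ker]
      show stdSymp ℝ n (jQ _ x) (jQ _ y) = 0
      rw [stdSymp_cast]
      have := hx y hy
      rw [BF_apply] at this
      rw [this]
      norm_num
    exact hker hz
  apply le_antisymm hle
  apply (Submodule.eq_of_le_of_finrank_le hle ?_).ge
  rw [finrank_orth, finrank_ES, finrank_ES, finrank_orth]

lemma mulVec_cast (A : Matrix (Fin n ⊕ Fin n) (Fin n ⊕ Fin n) ℤ) (x : Fin n ⊕ Fin n → ℚ) :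
    jQ _ ((A.map (Int.cast : ℤ → ℚ)) *ᵥ x) = (A.map (Int.cast : ℤ → ℝ)) *ᵥ (jQ _ x) := by
  funext i
  simp only [jQ_apply, Matrix.mulVec, dotProduct, Matrix.map_apply]
  push_cast
  rfl

lemma ES_invt (A : Matrix (Fin n ⊕ Fin n) (Fin n ⊕ Fin n) ℤ)
    {S : Submodule ℚ (Fin n ⊕ Fin n → ℚ)}
    (hS : ∀ x ∈ S, (A.map (Int.cast : ℤ → ℚ)) *ᵥ x ∈ S) :
    ∀ w ∈ ES S, (A.map (Int.cast : ℤ → ℝ)) *ᵥ w ∈ ES S := by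
  intro w hw
  have : (A.map (Int.cast : ℤ → ℝ)).mulVecLin w ∈
      Submodule.map (A.map (Int.cast : ℤ → ℝ)).mulVecLin (ES S) :=
    Submodule.mem_map_of_mem hw
  rw [ES, Submodule.map_span] at this
  refine Submodule.span_le.mpr ?_ this
  rintro _ ⟨_, ⟨y, hy, rfl⟩, rfl⟩
  have : (A.map (Int.cast : ℤ → ℝ)).mulVecLin (jQ _ y) = jQ _ ((A.map (Int.cast : ℤ → ℚ)) *ᵥ y) := by
    rw [mulVec_cast]; rfl
  rw [this]
  exact mem_ES (hS y hy)


section Qlevel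

variable (A : Matrix (Fin n ⊕ Fin n) (Fin n ⊕ Fin n) ℤ)

lemma symp_Q (hsymp : ∀ v w, stdSymp ℝ n ((A.map (Int.cast : ℤ → ℝ)) *ᵥ v)
        ((A.map (Int.cast : ℤ → ℝ)) *ᵥ w) = stdSymp ℝ n v w) : ∀ x y, stdSymp ℚ n ((A.map (Int.cast : ℤ → ℚ)) *ᵥ x)
    ((A.map (Int.cast : ℤ → ℚ)) *ᵥ y) = stdSymp ℚ n x y := by
  intro x y
  have h := hsymp (jQ _ x) (jQ _ y)
  rw [← mulVec_cast, ← mulVec_cast, stdSymp_cast, stdSymp_cast] at h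
  exact_mod_cast h

lemma AQ_injective (hsymp : ∀ v w, stdSymp ℝ n ((A.map (Int.cast : ℤ → ℝ)) *ᵥ v)
        ((A.map (Int.cast : ℤ → ℝ)) *ᵥ w) = stdSymp ℝ n v w) : Function.Injective (A.map (Int.cast : ℤ → ℚ)).mulVecLin := by
  have hQ := symp_Q A hsymp
  rw [← LinearMap.ker_eq_bot]
  rw [Submodule.eq_bot_iff]
  intro x hx
  rw [LinearMap.mem_ker] at hx
  replace hx : (A.map (Int.cast : ℤ → ℚ)) *ᵥ x = 0 := hx
  apply (BF_nondeg ℚ).1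
  intro w
  rw [BF_apply, stdSymp_skew]
  have : stdSymp ℚ n x w = 0 := by
    rw [← hQ x w, hx]
    simp [stdSymp]
  rw [this, neg_zero]

lemma map_AQ_eq (hsymp : ∀ v w, stdSymp ℝ n ((A.map (Int.cast : ℤ → ℝ)) *ᵥ v)
        ((A.map (Int.cast : ℤ → ℝ)) *ᵥ w) = stdSymp ℝ n v w) {S : Submodule ℚ (Fin n ⊕ Fin n → ℚ)}
    (hS : ∀ x ∈ S, (A.map (Int.cast : ℤ → ℚ)) *ᵥ x ∈ S) :
    Submodule.map (A.map (Int.cast : ℤ → ℚ)).mulVecLin S = S := by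
  have hinj := AQ_injective A hsymp
  have hle : Submodule.map (A.map (Int.cast : ℤ → ℚ)).mulVecLin S ≤ S := by
    rintro _ ⟨x, hx, rfl⟩
    exact hS x hx
  apply Submodule.eq_of_le_of_finrank_le hle
  exact (Submodule.equivMapOfInjective _ hinj S).finrank_eq.le

lemma orth_invt (hsymp : ∀ v w, stdSymp ℝ n ((A.map (Int.cast : ℤ → ℝ)) *ᵥ v)
        ((A.map (Int.cast : ℤ → ℝ)) *ᵥ w) = stdSymp ℝ n v w) {S : Submodule ℚ (Fin n ⊕ Fin n → ℚ)}
    (hS : ∀ x ∈ S, (A.map (Int.cast : ℤ → ℚ)) *ᵥ x ∈ S) :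
    ∀ y ∈ (BF ℚ n).orthogonal S, (A.map (Int.cast : ℤ → ℚ)) *ᵥ y ∈ (BF ℚ n).orthogonal S := by
  intro y hy z hz
  have hmap := map_AQ_eq A hsymp hS
  rw [← hmap] at hz
  obtain ⟨z', hz', rfl⟩ := hz
  rw [BF_apply]
  show stdSymp ℚ n ((A.map (Int.cast : ℤ → ℚ)) *ᵥ y)
    ((A.map (Int.cast : ℤ → ℚ)).mulVecLin z') = 0
  have : (A.map (Int.cast : ℤ → ℚ)).mulVecLin z' = (A.map (Int.cast : ℤ → ℚ)) *ᵥ z' := rfl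
  rw [this, symp_Q A hsymp]
  have h2 := hy z' hz'
  rw [BF_apply] at h2
  exact h2

end Qlevel

section Semisimple

open Polynomial

variable {ι : Type*} [Fintype ι] [DecidableEq ι]

lemma conj_pow (P D : Matrix ι ι ℂ) (hP : IsUnit P.det) (k : ℕ) :
    (P * D * P⁻¹) ^ k = P * D ^ k * P⁻¹ := by
  induction k with
  | zero => simp [Matrix.mul_nonsing_inv P hP]
  | succ k ih =>
    rw [pow_succ, ih, pow_succ]
    calc P * D ^ k * P⁻¹ * (P * D * P⁻¹)
        = P * D ^ k * (P⁻¹ * P) * D * P⁻¹ := by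
          simp only [Matrix.mul_assoc]
      _ = P * (D ^ k * D) * P⁻¹ := by
          rw [Matrix.nonsing_inv_mul P hP]
          simp only [Matrix.mul_assoc, Matrix.one_mul]

lemma aeval_conj (P D : Matrix ι ι ℂ) (hP : IsUnit P.det) (q : ℂ[X]) :
    aeval (P * D * P⁻¹) q = P * aeval D q * P⁻¹ := by
  induction q using Polynomial.induction_on' with
  | add p q hp hq =>
    rw [map_add, map_add, hp, hq, Matrix.mul_add, Matrix.add_mul]
  | monomial k a =>
    rw [aeval_monomial, aeval_monomial, conj_pow P D hP, ← Algebra.smul_def,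
      ← Algebra.smul_def, mul_smul_comm, smul_mul_assoc]

lemma aeval_diag (dg : ι → ℂ) (q : ℂ[X]) :
    aeval (Matrix.diagonal dg) q = Matrix.diagonal (fun i => q.eval (dg i)) := by
  have h1 : aeval ((Matrix.diagonalAlgHom ℂ : (ι → ℂ) →ₐ[ℂ] Matrix ι ι ℂ) dg) q
      = (Matrix.diagonalAlgHom ℂ : (ι → ℂ) →ₐ[ℂ] Matrix ι ι ℂ) (aeval dg q) :=
    aeval_algHom_apply _ _ _
  have h2 : aeval dg q = fun i => q.eval (dg i) := by
    funext i
    have h3 : aeval ((Pi.evalAlgHom ℂ (fun _ : ι => ℂ) i) dg) q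
        = (Pi.evalAlgHom ℂ (fun _ : ι => ℂ) i) (aeval dg q) := aeval_algHom_apply _ _ _
    simp only [Pi.evalAlgHom_apply] at h3
    rw [← h3, ← coe_aeval_eq_eval]
  simpa [Matrix.diagonalAlgHom_apply, h2] using h1

lemma sf_minpoly (A : Matrix ι ι ℤ)
    (hdiag : ∃ (P : Matrix ι ι ℂ) (dg : ι → ℂ),
      IsUnit P.det ∧ A.map (Int.cast : ℤ → ℂ) = P * Matrix.diagonal dg * P⁻¹) :
    Squarefree (minpoly ℚ (A.map (Int.cast : ℤ → ℚ))) := by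
  classical
  obtain ⟨P, dg, hP, hA⟩ := hdiag
  set AQ : Matrix ι ι ℚ := A.map (Int.cast : ℤ → ℚ) with hAQ
  set AC : Matrix ι ι ℂ := A.map (Int.cast : ℤ → ℂ) with hAC
  set p : ℚ[X] := minpoly ℚ AQ with hp
  have hint : IsIntegral ℚ AQ := IsIntegral.of_finite ℚ AQ
  have hp0 : p ≠ 0 := minpoly.ne_zero hint
  by_contra hsq
  rw [Squarefree] at hsq
  push_neg at hsq
  obtain ⟨x, hxx, hxu⟩ := hsq
  have hx0 : x ≠ 0 := by
    rintro rfl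
    rw [zero_mul, zero_dvd_iff] at hxx
    exact hp0 hxx
  obtain ⟨π, hπirr, hπx⟩ := WfDvdMonoid.exists_irreducible_factor hxu hx0
  have hπ2 : π ^ 2 ∣ p := by
    calc π ^ 2 = π * π := sq π
    _ ∣ x * x := mul_dvd_mul hπx hπx
    _ ∣ p := hxx
  obtain ⟨t, hpt⟩ := hπ2
  have hπ0 : π ≠ 0 := hπirr.ne_zero
  have ht0 : t ≠ 0 := by
    rintro rfl
    rw [mul_zero] at hpt
    exact hp0 hpt
  -- the squarefree complex annihilating polynomial from diagonalizability
  set q : ℂ[X] := ∏ c ∈ Finset.univ.image dg, (X - C c) with hq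
  have hqsep : q.Separable := by
    rw [hq]
    rw [show (∏ c ∈ Finset.univ.image dg, (X - C c))
        = ∏ c ∈ Finset.univ.image dg, (X - C (id c)) from rfl]
    rw [separable_prod_X_sub_C_iff']
    intro a _ b _ h
    simpa using h
  have hqsf : Squarefree q := hqsep.squarefree
  have hqA : aeval AC q = 0 := by
    rw [hA, aeval_conj P _ hP, aeval_diag]
    have : (fun i => q.eval (dg i)) = fun _ => 0 := by
      funext i
      rw [hq, eval_prod]
      apply Finset.prod_eq_zero (Finset.mem_image_of_mem dg (Finset.mem_univ i))
      simp
    rw [this]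
    simp [Matrix.diagonal_zero]
  set minC : ℂ[X] := minpoly ℂ AC with hminC
  have hmdvd : minC ∣ q := minpoly.dvd ℂ AC hqA
  have hmsf : Squarefree minC := hqsf.squarefree_of_dvd hmdvd
  -- the algebra map bridge
  set φ : Matrix ι ι ℚ →ₐ[ℚ] Matrix ι ι ℂ := (Algebra.ofId ℚ ℂ).mapMatrix with hφ
  have hφA : φ AQ = AC := by
    ext i k
    simp only [hφ, AlgHom.mapMatrix_apply, Matrix.map_apply, hAQ, hAC, Algebra.ofId_apply]
    push_cast
    rfl
  have hφinj : Function.Injective φ := by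
    intro X Y h
    ext i k
    have h2 := Matrix.ext_iff.mpr h i k
    simp only [hφ, AlgHom.mapMatrix_apply, Matrix.map_apply] at h2
    exact (algebraMap ℚ ℂ).injective h2
  have h1 : aeval AC (p.map (algebraMap ℚ ℂ)) = 0 := by
    rw [aeval_map_algebraMap]
    have h1a : aeval (φ AQ) p = φ (aeval AQ p) := aeval_algHom_apply _ _ _
    rw [← hφA, h1a, minpoly.aeval, map_zero]
  have h2 : minC ∣ p.map (algebraMap ℚ ℂ) := minpoly.dvd ℂ AC h1
  have h4 : p.map (algebraMap ℚ ℂ) ∣ ((π * t).map (algebraMap ℚ ℂ)) ^ 2 := by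
    refine ⟨t.map (algebraMap ℚ ℂ), ?_⟩
    rw [hpt]
    rw [Polynomial.map_mul, Polynomial.map_mul, Polynomial.map_pow]
    ring
  have h5 : minC ∣ (π * t).map (algebraMap ℚ ℂ) :=
    (hmsf.dvd_pow_iff_dvd two_ne_zero).mp (h2.trans h4)
  have h6 : aeval AC ((π * t).map (algebraMap ℚ ℂ)) = 0 := by
    obtain ⟨c, hc⟩ := h5
    rw [hc, _root_.map_mul, minpoly.aeval, zero_mul]
  have h7 : aeval AQ (π * t) = 0 := by
    apply hφinj
    rw [map_zero]
    have h7a : aeval (φ AQ) (π * t) = φ (aeval AQ (π * t)) := aeval_algHom_apply _ _ _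
    rw [← h7a, hφA, ← aeval_map_algebraMap ℂ, h6]
  have h8 : p ∣ π * t := minpoly.dvd ℚ AQ h7
  have hπt0 : π * t ≠ 0 := mul_ne_zero hπ0 ht0
  have hdeg := Polynomial.natDegree_le_of_dvd h8 hπt0
  rw [hpt] at hdeg
  rw [Polynomial.natDegree_mul (pow_ne_zero 2 hπ0) ht0,
    Polynomial.natDegree_mul hπ0 ht0, Polynomial.natDegree_pow] at hdeg
  have := hπirr.natDegree_pos
  omega

lemma fQ_semisimple (A : Matrix ι ι ℤ)
    (hdiag : ∃ (P : Matrix ι ι ℂ) (dg : ι → ℂ),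
      IsUnit P.det ∧ A.map (Int.cast : ℤ → ℂ) = P * Matrix.diagonal dg * P⁻¹) :
    Module.End.IsSemisimple ((A.map (Int.cast : ℤ → ℚ)).mulVecLin) := by
  classical
  set AQ : Matrix ι ι ℚ := A.map (Int.cast : ℤ → ℚ) with hAQ
  have hsf := sf_minpoly A hdiag
  have h0 : (Matrix.toLinAlgEquiv' : Matrix ι ι ℚ ≃ₐ[ℚ] _) AQ = AQ.mulVecLin := by
    ext v
    simp [Matrix.toLinAlgEquiv'_apply]
  have h1 : aeval (AQ.mulVecLin) (minpoly ℚ AQ) = 0 := by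
    rw [← h0]
    have h2 : aeval ((Matrix.toLinAlgEquiv' : Matrix ι ι ℚ ≃ₐ[ℚ] _).toAlgHom AQ) (minpoly ℚ AQ)
        = (Matrix.toLinAlgEquiv' : Matrix ι ι ℚ ≃ₐ[ℚ] _).toAlgHom (aeval AQ (minpoly ℚ AQ)) :=
      aeval_algHom_apply _ _ _
    rw [minpoly.aeval, map_zero] at h2
    exact h2
  exact Module.End.isSemisimple_of_squarefree_aeval_eq_zero hsf h1

end Semisimple

lemma mem_sympCompl {V : Submodule ℝ (Fin n ⊕ Fin n → ℝ)} {w : Fin n ⊕ Fin n → ℝ} :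
    w ∈ sympCompl n V ↔ ∀ z ∈ V, stdSymp ℝ n w z = 0 := Iff.rfl

end Stmt4Aux

open Stmt4Aux

/-- Let `A` be an integer symplectic matrix, diagonalizable over `ℂ`, and `V ⊆ ℝ^{2n}` a
rational `A`-invariant subspace that is not coisotropic.  Then there is a nontrivial rational
`A`-invariant subspace `W ⊆ V^{⊥σ}` with `W ∩ V = 0` which is symplectic
(`W ∩ W^{⊥σ} = 0`). -/
theorem stmt4 (n : ℕ) (A : Matrix (Fin n ⊕ Fin n) (Fin n ⊕ Fin n) ℤ)
    (hsymp : ∀ v w, stdSymp ℝ n ((A.map (Int.cast : ℤ → ℝ)) *ᵥ v)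
        ((A.map (Int.cast : ℤ → ℝ)) *ᵥ w) = stdSymp ℝ n v w)
    (hdiag : ∃ (P : Matrix (Fin n ⊕ Fin n) (Fin n ⊕ Fin n) ℂ) (dg : Fin n ⊕ Fin n → ℂ),
      IsUnit P.det ∧ A.map (Int.cast : ℤ → ℂ) = P * Matrix.diagonal dg * P⁻¹)
    (V : Submodule ℝ (Fin n ⊕ Fin n → ℝ))
    (hVrat : IsRationalSubspace V)
    (hVinv : ∀ v ∈ V, (A.map (Int.cast : ℤ → ℝ)) *ᵥ v ∈ V)
    (hVnotco : ¬ sympCompl n V ≤ V) :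
    ∃ W : Submodule ℝ (Fin n ⊕ Fin n → ℝ),
      W ≠ ⊥ ∧ IsRationalSubspace W ∧
      (∀ w ∈ W, (A.map (Int.cast : ℤ → ℝ)) *ᵥ w ∈ W) ∧
      W ≤ sympCompl n V ∧ W ⊓ V = ⊥ ∧ W ⊓ sympCompl n W = ⊥ := by
  classical
  set S : Submodule ℚ (Fin n ⊕ Fin n → ℚ) :=
    Submodule.comap (jQ (Fin n ⊕ Fin n)) (V.restrictScalars ℚ) with hSdef
  have hmemS : ∀ x : Fin n ⊕ Fin n → ℚ, x ∈ S ↔ jQ _ x ∈ V := fun x => Iff.rfl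
  have hVES : V = ES S := by
    apply le_antisymm
    · obtain ⟨s, hVs⟩ := hVrat
      rw [hVs]
      rw [Submodule.span_le]
      rintro _ ⟨y, hy, rfl⟩
      have hyV : jQ (Fin n ⊕ Fin n) y ∈ V := by
        rw [hVs]
        exact Submodule.subset_span ⟨y, hy, rfl⟩
      exact mem_ES ((hmemS y).mpr hyV)
    · rw [ES_le_iff]
      intro x hx
      exact (hmemS x).mp hx
  have hSinv : ∀ x ∈ S, (A.map (Int.cast : ℤ → ℚ)) *ᵥ x ∈ S := by
    intro x hx
    rw [hmemS, mulVec_cast]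
    exact hVinv _ ((hmemS x).mp hx)
  set T : Submodule ℚ (Fin n ⊕ Fin n → ℚ) := (BF ℚ n).orthogonal S with hTdef
  have hUV : sympCompl n V = ES T := by
    rw [hVES, sympCompl_eq_orth, ← ES_orthogonal]
  have hTinv := orth_invt A hsymp hSinv
  set N : Submodule ℚ (Fin n ⊕ Fin n → ℚ) := S ⊓ T with hNdef
  have hNinv : ∀ x ∈ N, (A.map (Int.cast : ℤ → ℚ)) *ᵥ x ∈ N := by
    intro x hx
    exact ⟨hSinv x hx.1, hTinv x hx.2⟩
  -- semisimplicity gives an invariant complement of N inside T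
  set f : Module.End ℚ (Fin n ⊕ Fin n → ℚ) := (A.map (Int.cast : ℤ → ℚ)).mulVecLin with hfdef
  have hss : f.IsSemisimple := fQ_semisimple A hdiag
  have hTmem : T ∈ Module.End.invtSubmodule f := by
    rw [Module.End.mem_invtSubmodule]
    intro x hx
    rw [Submodule.mem_comap]
    exact hTinv x hx
  have hNmem : N ∈ Module.End.invtSubmodule f := by
    rw [Module.End.mem_invtSubmodule]
    intro x hx
    rw [Submodule.mem_comap]
    exact hNinv x hx
  obtain ⟨W', hW'le, hW'mem, hW'disj, hW'sup⟩ :=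
    (Module.End.isSemisimple_restrict_iff T hTmem).mp (hss.restrict hTmem) N hNmem inf_le_right
  have hW'inv : ∀ x ∈ W', (A.map (Int.cast : ℤ → ℚ)) *ᵥ x ∈ W' := by
    intro x hx
    have := (Module.End.mem_invtSubmodule f).mp hW'mem hx
    rwa [Submodule.mem_comap] at this
  refine ⟨ES W', ?_, isRational_ES W', ES_invt A hW'inv, ?_, ?_, ?_⟩
  · -- nontrivial
    apply ES_ne_bot
    intro hbot
    apply hVnotco
    rw [hbot, sup_bot_eq] at hW'sup
    rw [hUV, hVES, ← hW'sup]
    exact ES_mono inf_le_left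
  · rw [hUV]
    exact ES_mono hW'le
  · -- ES W' ⊓ V = ⊥
    rw [hVES]
    apply ES_inf_eq_bot
    rw [← le_bot_iff]
    intro x hx
    have hxN : x ∈ N := ⟨hx.2, hW'le hx.1⟩
    have := (disjoint_iff.mp hW'disj)
    rw [← this]
    exact ⟨hxN, hx.1⟩
  · -- symplecticity
    have hWle : ES W' ≤ sympCompl n V := by rw [hUV]; exact ES_mono hW'le
    have hWV : ES W' ⊓ V = ⊥ := by
      rw [hVES]
      apply ES_inf_eq_bot
      rw [← le_bot_iff]
      intro x hx
      have hxN : x ∈ N := ⟨hx.2, hW'le hx.1⟩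
      rw [← disjoint_iff.mp hW'disj]
      exact ⟨hxN, hx.1⟩
    rw [Submodule.eq_bot_iff]
    rintro w ⟨hwW, hwC⟩
    have hsplit : sympCompl n V = ES N ⊔ ES W' := by
      rw [hUV, ← hW'sup, ES_sup]
    have hworth : ∀ z ∈ sympCompl n V, stdSymp ℝ n w z = 0 := by
      intro z hz
      rw [hsplit] at hz
      obtain ⟨zN, hzN, zW, hzW, rfl⟩ := Submodule.mem_sup.mp hz
      have h1 : stdSymp ℝ n w zN = 0 := by
        have hzNV : zN ∈ V := by
          rw [hVES]
          exact ES_mono inf_le_left hzN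
        exact mem_sympCompl.mp (hWle hwW) zN hzNV
      have h2 : stdSymp ℝ n w zW = 0 := mem_sympCompl.mp hwC zW hzW
      have : BF ℝ n (zN + zW) w = BF ℝ n zN w + BF ℝ n zW w := by
        rw [map_add, LinearMap.add_apply]
      rw [show stdSymp ℝ n w (zN + zW) = BF ℝ n (zN + zW) w from rfl, this,
        show BF ℝ n zN w = stdSymp ℝ n w zN from rfl,
        show BF ℝ n zW w = stdSymp ℝ n w zW from rfl, h1, h2, add_zero]
    have hwV : w ∈ V := by
      have hmem : w ∈ (BF ℝ n).orthogonal ((BF ℝ n).orthogonal V) := by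
        intro z hz
        rw [← sympCompl_eq_orth] at hz
        exact hworth z hz
      rwa [LinearMap.BilinForm.orthogonal_orthogonal (BF_nondeg ℝ) (BF_refl ℝ)] at hmem
    have : w ∈ ES W' ⊓ V := ⟨hwW, hwV⟩
    rw [hWV] at this
    exact this
end

section
/- Let ν ∈ (0,1), 0 < α₀ ≤ α₁, and 0 < α₂ ≤ (ν/2)α₁. If X ⊂ ℝⁿ is ν-porous on balls from scales α₀ to α₁, then the neighborhood X(α₂) = X + B_{α₂}(0) is (ν/2)-porous on balls from scales max(α₀, (2/ν)α₂) to α₁. -/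
open Pointwise
/-- `X ⊆ ℝⁿ` is `ν`-porous on balls from scales `α₀` to `α₁`: for every ball of diameter `R`
with `α₀ < R < α₁` there is a point `x` of the ball with `B_{νR}(x) ∩ X = ∅`. -/
def PorousOnBalls {n : ℕ} (ν α0 α1 : ℝ) (X : Set (EuclideanSpace ℝ (Fin n))) : Prop :=
  ∀ (c : EuclideanSpace ℝ (Fin n)) (R : ℝ), α0 < R → R < α1 →
    ∃ x ∈ Metric.closedBall c (R / 2), Metric.ball x (ν * R) ∩ X = ∅

/-- If `X` is `ν`-porous on balls from scales `α₀` to `α₁` and `0 < α₂ ≤ (ν/2)α₁`, then the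
neighborhood `X(α₂) = X + B_{α₂}(0)` is `(ν/2)`-porous on balls from scales
`max(α₀, (2/ν)α₂)` to `α₁`. -/
theorem stmt6 {n : ℕ} (ν α0 α1 α2 : ℝ) (hν0 : 0 < ν) (hν1 : ν < 1)
    (h00 : 0 < α0) (h01 : α0 ≤ α1) (h20 : 0 < α2) (h21 : α2 ≤ ν / 2 * α1)
    (X : Set (EuclideanSpace ℝ (Fin n))) (hX : PorousOnBalls ν α0 α1 X) :
    PorousOnBalls (ν / 2) (max α0 (2 / ν * α2)) α1 (X + Metric.ball (0 : EuclideanSpace ℝ (Fin n)) α2) := by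
  intro c R hR0 hR1
  have hα0 : α0 < R := lt_of_le_of_lt (le_max_left _ _) hR0
  have hα2 : 2 / ν * α2 < R := lt_of_le_of_lt (le_max_right _ _) hR0
  have hα2' : α2 < ν / 2 * R := by
    rw [div_mul_eq_mul_div, lt_div_iff₀ (by norm_num : (0:ℝ) < 2)]
    calc α2 * 2 = ν * (2 / ν * α2) := by field_simp
    _ < ν * R := by exact mul_lt_mul_of_pos_left hα2 hν0
  obtain ⟨x, hx, hempty⟩ := hX c R hα0 hR1
  refine ⟨x, hx, ?_⟩
  ext y
  simp only [Set.mem_inter_iff, Set.mem_empty_iff_false, iff_false, not_and]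
  intro hy hyX
  obtain ⟨p, hp, q, hq, rfl⟩ := hyX
  have hdist : dist p x < ν * R := by
    have h1 : dist (p + q) x < ν / 2 * R := Metric.mem_ball.mp hy
    have h2 : ‖q‖ < α2 := by simpa using Metric.mem_ball.mp hq
    calc dist p x = ‖(p + q - x) + (-q)‖ := by rw [dist_eq_norm]; congr 1; abel
    _ ≤ ‖p + q - x‖ + ‖-q‖ := norm_add_le _ _
    _ = dist (p + q) x + ‖q‖ := by rw [dist_eq_norm, norm_neg]
    _ < ν / 2 * R + ν / 2 * R := by linarith
    _ = ν * R := by ring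
  have : p ∈ Metric.ball x (ν * R) ∩ X := ⟨Metric.mem_ball.mpr hdist, hp⟩
  rw [hempty] at this
  exact this
end

section
/- Let ν ∈ (0,1), 0 < α₀ ≤ α₁, and 0 < α₂ ≤ (ν/2)α₁. If X ⊂ ℝⁿ is ν-porous on lines from scales α₀ to α₁, then the neighborhood X(α₂) = X + B_{α₂}(0) is (ν/2)-porous on lines from scales max(α₀, (2/ν)α₂) to α₁. -/
open Pointwise

/-- `X ⊆ ℝⁿ` is `ν`-porous on lines from scales `α₀` to `α₁`: for every line segment of
length `R` with `α₀ < R < α₁` there is a point `x` of the segment with `B_{νR}(x) ∩ X = ∅`. -/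
def PorousOnLines {n : ℕ} (ν α0 α1 : ℝ) (X : Set (EuclideanSpace ℝ (Fin n))) : Prop :=
  ∀ a b : EuclideanSpace ℝ (Fin n), α0 < dist a b → dist a b < α1 →
    ∃ x ∈ segment ℝ a b, Metric.ball x (ν * dist a b) ∩ X = ∅

/-- If `X` is `ν`-porous on lines from scales `α₀` to `α₁` and `0 < α₂ ≤ (ν/2)α₁`, then the
neighborhood `X(α₂) = X + B_{α₂}(0)` is `(ν/2)`-porous on lines from scales
`max(α₀, (2/ν)α₂)` to `α₁`. -/
theorem stmt7 {n : ℕ} (ν α0 α1 α2 : ℝ) (hν0 : 0 < ν) (hν1 : ν < 1)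
    (h00 : 0 < α0) (h01 : α0 ≤ α1) (h20 : 0 < α2) (h21 : α2 ≤ ν / 2 * α1)
    (X : Set (EuclideanSpace ℝ (Fin n))) (hX : PorousOnLines ν α0 α1 X) :
    PorousOnLines (ν / 2) (max α0 (2 / ν * α2)) α1
      (X + Metric.ball (0 : EuclideanSpace ℝ (Fin n)) α2) := by
  intro a b hlo hhi
  have h0 : α0 < dist a b := lt_of_le_of_lt (le_max_left _ _) hlo
  have h2 : 2 / ν * α2 < dist a b := lt_of_le_of_lt (le_max_right _ _) hlo
  obtain ⟨x, hx, hball⟩ := hX a b h0 hhi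
  refine ⟨x, hx, ?_⟩
  ext y
  simp only [Set.mem_inter_iff, Set.mem_empty_iff_false, iff_false, not_and]
  rintro hy ⟨z, hz, w, hw, rfl⟩
  have hα2 : α2 < ν / 2 * dist a b := by
    have h := mul_lt_mul_of_pos_left h2 hν0
    rw [show ν * (2 / ν * α2) = 2 * α2 by field_simp] at h
    linarith
  have hzx : dist z x < ν * dist a b := by
    have h1 : dist (z + w) x < ν / 2 * dist a b := Metric.mem_ball.mp hy
    have h3 : dist z (z + w) < α2 := by
      simpa [dist_eq_norm] using Metric.mem_ball.mp hw
    calc dist z x ≤ dist z (z + w) + dist (z + w) x := dist_triangle _ _ _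
      _ < α2 + ν / 2 * dist a b := by linarith
      _ < ν * dist a b := by linarith
  exact Set.eq_empty_iff_forall_notMem.mp hball z ⟨Metric.mem_ball.mpr hzx, hz⟩
end

section
/- Let f ∈ ℤ[x] be a monic irreducible reciprocal polynomial of degree 2n (n ≥ 2) with roots λ₁,…,λ_{2n} ∈ ℂ, and suppose the Galois group of f (as a permutation group of the roots paired as {λ, 1/λ}) is the full wreath product S₂ ≀ Sₙ. Then for every root λ of f and every integer m ≥ 1, ℚ(λ^m) = ℚ(λ); consequently the minimal polynomial of λ^m has degree 2n. -/
open Polynomial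

/-- The wreath product `S₂ ≀ Sₙ`, realized as the subgroup of permutations of
`Fin n × Fin 2` (the `2n` roots, grouped into `n` pairs) preserving the partition
into the pairs `{i} × Fin 2`. -/
def wreathS2Sn (n : ℕ) : Subgroup (Equiv.Perm (Fin n × Fin 2)) where
  carrier := {g | ∃ s : Equiv.Perm (Fin n), ∀ p, (g p).1 = s p.1}
  one_mem' := ⟨1, fun _ => rfl⟩
  mul_mem' := by
    rintro g h ⟨s, hs⟩ ⟨t, ht⟩
    exact ⟨s * t, fun p => by
      rw [Equiv.Perm.mul_apply, Equiv.Perm.mul_apply, hs (h p), ht p]⟩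
  inv_mem' := by
    rintro g ⟨s, hs⟩
    refine ⟨s⁻¹, fun p => ?_⟩
    have h := hs (g⁻¹ p)
    rw [show g (g⁻¹ p) = p from g.apply_symm_apply p] at h
    rw [h, show s⁻¹ (s (g⁻¹ p).1) = (g⁻¹ p).1 from s.symm_apply_apply _]

lemma swap_mem_wreathS2Sn {n : ℕ} (j : Fin n) :
    Equiv.swap ((j, 0) : Fin n × Fin 2) (j, 1) ∈ wreathS2Sn n := by
  refine ⟨1, fun p => ?_⟩
  rcases eq_or_ne p (j, 0) with rfl | h1
  · simp
  rcases eq_or_ne p (j, 1) with rfl | h2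
  · simp
  · rw [Equiv.swap_apply_of_ne_of_ne h1 h2]; rfl

/-- Let `f ∈ ℤ[x]` be monic, irreducible, reciprocal of degree `2n` (`n ≥ 2`), whose roots
(in the splitting field over `ℚ`) are enumerated as `r (i,0), r (i,1) = r(i,0)⁻¹`
(`i ∈ Fin n`), and whose Galois group, acting on the roots, realizes the full wreath
product `S₂ ≀ Sₙ`.  Then for every root `λ = r p` and every `m ≥ 1`,
`ℚ(λ^m) = ℚ(λ)`, and the minimal polynomial of `λ^m` has degree `2n`. -/
theorem stmt15 (n : ℕ) (hn : 2 ≤ n) (f : Polynomial ℤ)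
    (hmonic : f.Monic) (hirr : Irreducible f) (hdeg : f.natDegree = 2 * n)
    (hrec : f.reverse = f)
    (r : Fin n × Fin 2 → (f.map (Int.castRingHom ℚ)).SplittingField)
    (hrinj : Function.Injective r)
    (hroot : ∀ p, Polynomial.aeval (r p) (f.map (Int.castRingHom ℚ)) = 0)
    (hall : ∀ x, Polynomial.aeval x (f.map (Int.castRingHom ℚ)) = 0 → ∃ p, r p = x)
    (hpair : ∀ i : Fin n, r (i, 1) = (r (i, 0))⁻¹)
    (φ : ((f.map (Int.castRingHom ℚ)).SplittingField ≃ₐ[ℚ]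
            (f.map (Int.castRingHom ℚ)).SplittingField) →* Equiv.Perm (Fin n × Fin 2))
    (hφact : ∀ σ p, σ (r p) = r (φ σ p))
    (hφinj : Function.Injective φ)
    (hφrange : φ.range = wreathS2Sn n) :
    ∀ p, ∀ m : ℕ, 1 ≤ m →
      IntermediateField.adjoin ℚ {(r p) ^ m} = IntermediateField.adjoin ℚ {r p} ∧
      (minpoly ℚ ((r p) ^ m)).natDegree = 2 * n := by
  classical
  have hf'monic : (f.map (Int.castRingHom ℚ)).Monic := hmonic.map _
  have hf'irr : Irreducible (f.map (Int.castRingHom ℚ)) :=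
    (Polynomial.IsPrimitive.Int.irreducible_iff_irreducible_map_cast hmonic.isPrimitive).mp hirr
  have hf'deg : (f.map (Int.castRingHom ℚ)).natDegree = 2 * n :=
    (hmonic.natDegree_map _).trans hdeg
  have hminr : ∀ q, minpoly ℚ (r q) = f.map (Int.castRingHom ℚ) := fun q =>
    (minpoly.eq_of_irreducible_of_monic hf'irr (hroot q) hf'monic).symm
  have hne : ∀ i : Fin n, r (i, 0) ≠ r (i, 1) := by
    intro i h
    have := hrinj h
    simp at this
  have hr00 : ∀ i : Fin n, r (i, 0) ≠ 0 := by
    intro i h0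
    exact hne i (by rw [hpair i, h0, inv_zero])
  have hr0 : ∀ q, r q ≠ 0 := by
    rintro ⟨i, e⟩
    fin_cases e
    · exact hr00 i
    · show r (i, 1) ≠ 0
      rw [hpair i]; exact inv_ne_zero (hr00 i)
  -- no root is a root of unity
  have hnotunity : ∀ q, ∀ N : ℕ, 1 ≤ N → (r q) ^ N ≠ 1 := by
    intro q0 N hN hNe
    haveI : NeZero N := ⟨by omega⟩
    have hdvd : (f.map (Int.castRingHom ℚ)) ∣ (X ^ N - 1 : ℚ[X]) := by
      rw [← hminr q0]
      apply minpoly.dvd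
      simp [hNe]
    have hallpow : ∀ q, (r q) ^ N = 1 := by
      intro q
      obtain ⟨c, hc⟩ := hdvd
      have h2 : (aeval (r q)) (X ^ N - 1 : ℚ[X]) = 0 := by
        rw [hc, map_mul, hroot q, zero_mul]
      simpa [sub_eq_zero] using h2
    set u : Fin n × Fin 2 → rootsOfUnity N (f.map (Int.castRingHom ℚ)).SplittingField := fun q =>
      rootsOfUnity.mkOfPowEq (r q) (hallpow q) with hu
    have hcomm : ∀ σ τ : (f.map (Int.castRingHom ℚ)).SplittingField ≃ₐ[ℚ] (f.map (Int.castRingHom ℚ)).SplittingField, ∀ q, σ (τ (r q)) = τ (σ (r q)) := by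
      intro σ τ q
      obtain ⟨a, ha⟩ := MonoidHom.map_cyclic (restrictRootsOfUnity σ N)
      obtain ⟨b, hb⟩ := MonoidHom.map_cyclic (restrictRootsOfUnity τ N)
      have key : restrictRootsOfUnity σ N (restrictRootsOfUnity τ N (u q)) =
                 restrictRootsOfUnity τ N (restrictRootsOfUnity σ N (u q)) := by
        rw [ha, hb, ha, hb, ← zpow_mul, ← zpow_mul, mul_comm]
      have := congrArg (fun z : rootsOfUnity N (f.map (Int.castRingHom ℚ)).SplittingField => ((z : (f.map (Int.castRingHom ℚ)).SplittingFieldˣ) : (f.map (Int.castRingHom ℚ)).SplittingField)) key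
      simpa [hu] using this
    have hcommAE : ∀ σ τ : (f.map (Int.castRingHom ℚ)).SplittingField ≃ₐ[ℚ] (f.map (Int.castRingHom ℚ)).SplittingField, σ * τ = τ * σ := by
      intro σ τ
      have hgen : Algebra.adjoin ℚ ((f.map (Int.castRingHom ℚ)).rootSet (f.map (Int.castRingHom ℚ)).SplittingField) = ⊤ :=
        Polynomial.SplittingField.adjoin_rootSet _
      have hle : Algebra.adjoin ℚ ((f.map (Int.castRingHom ℚ)).rootSet (f.map (Int.castRingHom ℚ)).SplittingField) ≤
          AlgHom.equalizer (σ * τ : (f.map (Int.castRingHom ℚ)).SplittingField ≃ₐ[ℚ] (f.map (Int.castRingHom ℚ)).SplittingField).toAlgHom (τ * σ : (f.map (Int.castRingHom ℚ)).SplittingField ≃ₐ[ℚ] (f.map (Int.castRingHom ℚ)).SplittingField).toAlgHom := by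
        apply Algebra.adjoin_le
        intro x hx
        obtain ⟨q, rfl⟩ := hall x (Polynomial.mem_rootSet.mp hx).2
        show σ (τ (r q)) = τ (σ (r q))
        exact hcomm σ τ q
      rw [hgen, top_le_iff] at hle
      ext x
      have hx : x ∈ AlgHom.equalizer (σ * τ : (f.map (Int.castRingHom ℚ)).SplittingField ≃ₐ[ℚ] (f.map (Int.castRingHom ℚ)).SplittingField).toAlgHom
          (τ * σ : (f.map (Int.castRingHom ℚ)).SplittingField ≃ₐ[ℚ] (f.map (Int.castRingHom ℚ)).SplittingField).toAlgHom := by rw [hle]; trivial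
      exact hx
    -- produce two non-commuting wreath elements
    let i0 : Fin n := ⟨0, by omega⟩
    let i1 : Fin n := ⟨1, by omega⟩
    have hi01 : i0 ≠ i1 := by simp [i0, i1, Fin.ext_iff]
    let g : Equiv.Perm (Fin n × Fin 2) := Equiv.swap (i0, 0) (i0, 1)
    let h : Equiv.Perm (Fin n × Fin 2) := Equiv.prodCongr (Equiv.swap i0 i1) (Equiv.refl _)
    have hg : g ∈ φ.range := by rw [hφrange]; exact swap_mem_wreathS2Sn i0
    have hh : h ∈ φ.range := by rw [hφrange]; exact ⟨Equiv.swap i0 i1, fun p => rfl⟩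
    obtain ⟨σ, hσ⟩ := hg
    obtain ⟨τ, hτ⟩ := hh
    have hcst : g * h = h * g := by
      rw [← hσ, ← hτ, ← map_mul, ← map_mul, hcommAE σ τ]
    have e1 : (g * h) (i0, 0) = (i1, 0) := by
      have h1 : h (i0, 0) = (i1, 0) := by simp [h, Equiv.swap_apply_left]
      rw [Equiv.Perm.mul_apply, h1]
      exact Equiv.swap_apply_of_ne_of_ne
        (fun hc => hi01 (congrArg Prod.fst hc).symm)
        (fun hc => hi01 (congrArg Prod.fst hc).symm)
    have e2 : (h * g) (i0, 0) = (i1, 1) := by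
      have h1 : g (i0, 0) = (i0, 1) := Equiv.swap_apply_left _ _
      rw [Equiv.Perm.mul_apply, h1]
      simp [h, Equiv.swap_apply_left]
    rw [hcst, e2] at e1
    simp at e1
  -- Galois group acts transitively on the roots
  have htrans : ∀ q q', ∃ σ : (f.map (Int.castRingHom ℚ)).SplittingField ≃ₐ[ℚ] (f.map (Int.castRingHom ℚ)).SplittingField, σ (r q) = r q' := by
    intro q q'
    have hmm : minpoly ℚ (r q') = minpoly ℚ (r q) := by rw [hminr, hminr]
    haveI : Normal ℚ (f.map (Int.castRingHom ℚ)).SplittingField :=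
      Polynomial.SplittingField.instNormal _
    obtain ⟨σ, hσ⟩ := (Normal.minpoly_eq_iff_mem_orbit (F := ℚ) (E := (f.map (Int.castRingHom ℚ)).SplittingField)).mp hmm
    exact ⟨σ, hσ⟩
  -- distinct m-th powers
  have hdist : ∀ m : ℕ, 1 ≤ m → Function.Injective (fun q => (r q) ^ m) := by
    intro m hm q q' hqq'
    simp only at hqq'
    by_contra hne'
    rcases eq_or_ne q.1 q'.1 with h1 | h1
    · have hq2 : q.2 ≠ q'.2 := fun h2 => hne' (Prod.ext h1 h2)
      have hinv : r q' = (r q)⁻¹ := by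
        obtain ⟨i, e⟩ := q
        obtain ⟨i', e'⟩ := q'
        simp only at h1
        subst h1
        simp only at hq2
        fin_cases e <;> fin_cases e' <;> simp_all
      have h2m : (r q) ^ (2 * m) = 1 := by
        rw [two_mul, pow_add]
        nth_rewrite 2 [hqq']
        rw [hinv, inv_pow, mul_inv_cancel₀ (pow_ne_zero _ (hr0 q))]
      exact hnotunity q (2 * m) (by omega) h2m
    · have hg : Equiv.swap ((q'.1, 0) : Fin n × Fin 2) (q'.1, 1) ∈ φ.range := by
        rw [hφrange]; exact swap_mem_wreathS2Sn q'.1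
      obtain ⟨σ, hσ⟩ := hg
      have hne1 : q ≠ (q'.1, 0) := fun hc => h1 (by rw [hc])
      have hne2 : q ≠ (q'.1, 1) := fun hc => h1 (by rw [hc])
      have hfixq : σ (r q) = r q := by
        rw [hφact, hσ, Equiv.swap_apply_of_ne_of_ne hne1 hne2]
      have hflip : σ (r q') = (r q')⁻¹ := by
        have hgen : ∀ e : Fin 2, σ (r (q'.1, e)) = (r (q'.1, e))⁻¹ := by
          intro e
          fin_cases e
          · show σ (r (q'.1, 0)) = (r (q'.1, 0))⁻¹
            rw [hφact, hσ, Equiv.swap_apply_left, hpair q'.1]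
          · show σ (r (q'.1, 1)) = (r (q'.1, 1))⁻¹
            rw [hφact, hσ, Equiv.swap_apply_right, hpair q'.1, inv_inv]
        have := hgen q'.2
        rwa [Prod.mk.eta] at this
      have hkey : (r q') ^ m = ((r q')⁻¹) ^ m := by
        have hc := congrArg σ hqq'
        rw [map_pow, map_pow, hfixq, hflip] at hc
        rw [← hqq']
        exact hc
      have h2m : (r q') ^ (2 * m) = 1 := by
        rw [two_mul, pow_add]
        nth_rewrite 2 [hkey]
        rw [inv_pow, mul_inv_cancel₀ (pow_ne_zero _ (hr0 q'))]
      exact hnotunity q' (2 * m) (by omega) h2m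
  -- main conclusion
  intro p m hm
  set x := (r p) ^ m with hx
  have hint : IsIntegral ℚ x := IsIntegral.of_finite ℚ x
  have hintr : IsIntegral ℚ (r p) := IsIntegral.of_finite ℚ (r p)
  have hle : IntermediateField.adjoin ℚ {x} ≤ IntermediateField.adjoin ℚ {r p} := by
    rw [IntermediateField.adjoin_le_iff]
    refine Set.singleton_subset_iff.mpr ?_
    exact pow_mem (IntermediateField.mem_adjoin_simple_self ℚ (r p)) m
  have h1 : Module.finrank ℚ (IntermediateField.adjoin ℚ {x}) = (minpoly ℚ x).natDegree :=
    IntermediateField.adjoin.finrank hint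
  have h2 : Module.finrank ℚ (IntermediateField.adjoin ℚ {r p}) =
      (minpoly ℚ (r p)).natDegree := IntermediateField.adjoin.finrank hintr
  have hdeg_le : (minpoly ℚ x).natDegree ≤ 2 * n := by
    have hmono : Module.finrank ℚ (IntermediateField.adjoin ℚ {x}) ≤
        Module.finrank ℚ (IntermediateField.adjoin ℚ {r p}) :=
      Submodule.finrank_mono (show (IntermediateField.adjoin ℚ {x}).toSubalgebra.toSubmodule ≤
        (IntermediateField.adjoin ℚ {r p}).toSubalgebra.toSubmodule from hle)
    rw [h1, h2, hminr, hf'deg] at hmono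
    exact hmono
  have hdeg_ge : 2 * n ≤ (minpoly ℚ x).natDegree := by
    have hroots : ∀ q, aeval ((r q) ^ m) (minpoly ℚ x) = 0 := by
      intro q
      obtain ⟨σ, hσ⟩ := htrans p q
      have hσx : σ x = (r q) ^ m := by rw [hx, map_pow, hσ]
      rw [← hσx, Polynomial.aeval_algHom_apply σ x, minpoly.aeval, map_zero]
    set P : (f.map (Int.castRingHom ℚ)).SplittingField[X] := (minpoly ℚ x).map (algebraMap ℚ (f.map (Int.castRingHom ℚ)).SplittingField) with hP
    have hPne : P ≠ 0 := ((minpoly.monic hint).map _).ne_zero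
    have hsub : Finset.univ.image (fun q => (r q) ^ m) ⊆ P.roots.toFinset := by
      intro y hy
      obtain ⟨q, _, rfl⟩ := Finset.mem_image.mp hy
      rw [Multiset.mem_toFinset, Polynomial.mem_roots hPne]
      rw [hP, Polynomial.IsRoot, Polynomial.eval_map, ← Polynomial.aeval_def]
      exact hroots q
    have hcard : (Finset.univ.image (fun q => (r q) ^ m)).card = 2 * n := by
      rw [Finset.card_image_of_injective _ (hdist m hm), Finset.card_univ]
      simp [mul_comm]
    calc 2 * n = (Finset.univ.image (fun q => (r q) ^ m)).card := hcard.symm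
      _ ≤ P.roots.toFinset.card := Finset.card_le_card hsub
      _ ≤ Multiset.card P.roots := P.roots.toFinset_card_le
      _ ≤ P.natDegree := Polynomial.card_roots' P
      _ = (minpoly ℚ x).natDegree := Polynomial.natDegree_map _
  have hdeg_eq : (minpoly ℚ x).natDegree = 2 * n := le_antisymm hdeg_le hdeg_ge
  refine ⟨?_, hdeg_eq⟩
  apply IntermediateField.eq_of_le_of_finrank_eq hle
  rw [h1, h2, hdeg_eq, hminr, hf'deg]
end

section
/- Let γ > 1 be a real number with γ + γ⁻¹ ∈ ℤ and γ² ∉ ℚ. Then the polynomial (x² + γ²)(x² + γ^{−2}) = x⁴ + (γ² + γ^{−2})x² + 1 is irreducible over ℚ. -/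
open Polynomial

lemma monic_deg2_eq (f : ℚ[X]) (hf : f.Monic) (hd : f.natDegree = 2) :
    f = X ^ 2 + C (f.coeff 1) * X + C (f.coeff 0) := by
  ext n
  match n with
  | 0 => simp [coeff_one]
  | 1 => simp [coeff_X_pow]
  | 2 =>
    have h2 : f.coeff 2 = 1 := by
      have := hf.coeff_natDegree
      rwa [hd] at this
    simp [h2, coeff_X_pow, coeff_C]
  | (n+3) =>
    have h1 : f.coeff (n+3) = 0 := coeff_eq_zero_of_natDegree_lt (by omega)
    have : 2 ≠ n + 3 := by omega
    simp [h1, coeff_X_pow, coeff_C, this, Nat.succ_ne_zero]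

/-- Let `γ > 1` with `γ + γ⁻¹ ∈ ℤ` and `γ² ∉ ℚ`.  Then the polynomial
`(x² + γ²)(x² + γ^{−2}) = x⁴ + (γ² + γ^{−2})x² + 1` is irreducible over `ℚ`. -/
theorem stmt16 (γ : ℝ) (hγ : 1 < γ) (hint : ∃ t : ℤ, (t : ℝ) = γ + γ⁻¹)
    (hsq : ¬ ∃ q : ℚ, (q : ℝ) = γ ^ 2)
    (c : ℚ) (hc : (c : ℝ) = γ ^ 2 + γ⁻¹ ^ 2) :
    Irreducible (X ^ 4 + C c * X ^ 2 + 1 : ℚ[X]) := by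
  have hγ0 : (0:ℝ) < γ := lt_trans one_pos hγ
  have hinv : γ * γ⁻¹ = 1 := mul_inv_cancel₀ (ne_of_gt hγ0)
  have hinv1 : γ⁻¹ < 1 := inv_lt_one_of_one_lt₀ hγ
  have hinv0 : 0 < γ⁻¹ := inv_pos.mpr hγ0
  have hc2 : (2:ℚ) < c := by
    have : (2:ℝ) < (c:ℝ) := by rw [hc]; nlinarith [sq_nonneg (γ - γ⁻¹)]
    exact_mod_cast this
  set p : ℚ[X] := X ^ 4 + C c * X ^ 2 + 1 with hp
  have hpd : p.natDegree = 4 := by rw [hp]; compute_degree!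
  have hpm : p.Monic := by
    have : p.coeff 4 = 1 := by simp [hp, coeff_X_pow, coeff_one]
    rwa [Monic, leadingCoeff, hpd]
  have hp0 : p ≠ 0 := hpm.ne_zero
  -- no rational root
  have hnoroot : ∀ r : ℚ, p.eval r ≠ 0 := by
    intro r hr
    simp only [hp, eval_add, eval_mul, eval_pow, eval_C, eval_X, eval_one] at hr
    nlinarith [sq_nonneg r, sq_nonneg (r^2), sq_nonneg (r^2+1)]
  by_contra h
  rw [irreducible_iff] at h
  push_neg at h
  obtain ⟨f, g, hfg, hfu, hgu⟩ := h (by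
    intro hu
    have := natDegree_eq_zero_of_isUnit hu
    omega)
  have hf0 : f ≠ 0 := fun hh => hp0 (by rw [hfg, hh, zero_mul])
  have hg0 : g ≠ 0 := fun hh => hp0 (by rw [hfg, hh, mul_zero])
  have hlf : f.leadingCoeff ≠ 0 := leadingCoeff_ne_zero.mpr hf0
  have hlg : g.leadingCoeff ≠ 0 := leadingCoeff_ne_zero.mpr hg0
  have hlfg : f.leadingCoeff * g.leadingCoeff = 1 := by
    rw [← leadingCoeff_mul, ← hfg]; exact hpm
  set F := f * C f.leadingCoeff⁻¹ with hF
  set G := g * C g.leadingCoeff⁻¹ with hG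
  have hFm : F.Monic := monic_mul_leadingCoeff_inv hf0
  have hGm : G.Monic := monic_mul_leadingCoeff_inv hg0
  have hFG : p = F * G := by
    rw [hF, hG, hfg]
    rw [mul_mul_mul_comm, ← C_mul]
    rw [show f.leadingCoeff⁻¹ * g.leadingCoeff⁻¹ = 1 by
      field_simp; exact hlfg.symm]
    rw [C_1, mul_one]
  have hdF : F.natDegree = f.natDegree := by
    rw [hF, natDegree_mul hf0 (by simpa using hlf), natDegree_C, add_zero]
  have hdG : G.natDegree = g.natDegree := by
    rw [hG, natDegree_mul hg0 (by simpa using hlg), natDegree_C, add_zero]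
  have hsum : F.natDegree + G.natDegree = 4 := by
    rw [← hpd, hFG, natDegree_mul hFm.ne_zero hGm.ne_zero]
  have hF1 : 1 ≤ F.natDegree := by
    by_contra hcon
    apply hfu
    rw [Polynomial.isUnit_iff_degree_eq_zero, degree_eq_natDegree hf0]
    have : f.natDegree = 0 := by omega
    simp [this]
  have hG1 : 1 ≤ G.natDegree := by
    by_contra hcon
    apply hgu
    rw [Polynomial.isUnit_iff_degree_eq_zero, degree_eq_natDegree hg0]
    have : g.natDegree = 0 := by omega
    simp [this]
  -- a monic linear factor gives a rational root: impossible
  have hlin : ∀ A B : ℚ[X], A.Monic → A.natDegree = 1 → p = A * B → False := by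
    intro A B hAm hA1 hAB
    have hAe := hAm.eq_X_add_C hA1
    apply hnoroot (-(A.coeff 0))
    rw [hAB, eval_mul, hAe]
    simp
  have hF3 : F.natDegree ≤ 3 := by omega
  interval_cases hFd : F.natDegree
  · exact hlin F G hFm hFd hFG
  · have hGd : G.natDegree = 2 := by omega
    have hFe := monic_deg2_eq F hFm hFd
    have hGe := monic_deg2_eq G hGm hGd
    have hprod := hFG
    rw [hFe, hGe, hp] at hprod
    set a := F.coeff 1 with ha
    set b := F.coeff 0 with hb
    set d := G.coeff 1 with hd'
    set e := G.coeff 0 with he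
    ring_nf at hprod
    have h0 := congrArg (fun q => Polynomial.coeff q 0) hprod
    have h1 := congrArg (fun q => Polynomial.coeff q 1) hprod
    have h2 := congrArg (fun q => Polynomial.coeff q 2) hprod
    have h3 := congrArg (fun q => Polynomial.coeff q 3) hprod
    simp [coeff_X_pow, coeff_one, coeff_C, mul_assoc] at h0 h1 h2 h3
    have hda : d = -a := by linarith
    rcases eq_or_ne a 0 with haz | haz
    · -- a = 0 : then b + e = c and b * e = 1
      have hbe : b * e = 1 := by linarith
      have hbpe : b + e = c := by
        have had : a * d = 0 := by rw [haz]; ring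
        linarith
      have hbeR : (b:ℝ) * (e:ℝ) = 1 := by exact_mod_cast hbe
      have hbpeR : (b:ℝ) + (e:ℝ) = γ ^ 2 + γ⁻¹ ^ 2 := by
        rw [← hc]; exact_mod_cast hbpe
      have key : ((b:ℝ) - γ ^ 2) * ((b:ℝ) - γ⁻¹ ^ 2) = 0 := by
        linear_combination (b:ℝ) * hbpeR - hbeR + (γ * γ⁻¹ + 1) * hinv
      rcases mul_eq_zero.mp key with hk | hk
      · exact hsq ⟨b, by linarith⟩
      · refine hsq ⟨c - b, ?_⟩
        push_cast
        rw [hc]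
        linarith
    · -- a ≠ 0 : then e = b, b² = 1, a² = 2b - c < 0
      have heb : e = b := by
        have : a * e + b * d = 0 := by linarith
        rw [hda] at this
        have : a * (e - b) = 0 := by ring_nf; linarith [this]
        rcases mul_eq_zero.mp this with h | h
        · exact absurd h haz
        · linarith
      have hb2 : b * b = 1 := by rw [heb] at h0; linarith
      have hE : a * a = 2 * b - c := by
        rw [hda, heb] at h2
        linear_combination h2
      nlinarith [sq_nonneg a, sq_nonneg (b - 1), hb2, hE, hc2]
  · have hGd : G.natDegree = 1 := by omega
    exact hlin G F hGm hGd (by rw [hFG, mul_comm])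
end
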